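/- arXiv:math/0306251 — 2 statements merged into one kernel-verified Lean document; each statement's English description precedes it below -/
import Mathlib

section
/- Let p, q be coprime integers with q positive. Then V(p,q) = −(2/π) ∑_{k=1}^{q−1} B₁(kp/q)·ψ(k/q), where V(p,q) = ∑_{k=1}^{q−1} {kp/q} cot(kπ/q) is the Vasyunin sum, B₁ the first Bernoulli function and ψ the digamma function. -/
open Classical in
/-- The first Bernoulli function. -/
noncomputable def B1 (y : ℝ) : ℝ := if ∃ n : ℤ, y = n then 0 else Int.fract y - 1 / 2

/-- The digamma function `ψ = Γ'/Γ`, as the derivative of `log Γ`. -/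
noncomputable def digamma (x : ℝ) : ℝ := deriv (fun y => Real.log (Real.Gamma y)) x

/-!
Pair the index `k` with `q - k`. Since `B₁` is odd modulo `1`, `B₁(p - y) = -B₁(y)`, and by the
reflection formula `ψ(1 - k/q) - ψ(k/q) = π cot(πk/q)`; so twice the digamma sum is
`-π ∑ B₁(kp/q) cot(πk/q)`. Replacing `B₁` by the fractional part adds `½` off `ℤ` and `0` on `ℤ`,
a correction invariant under `k ↦ q - k`, against which the odd `cot(πk/q)` sums to zero.
-/

open Real Finset

lemma hasDerivAt_log_Gamma {x : ℝ} (hx : 0 < x) :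
    HasDerivAt (fun y => log (Gamma y)) (digamma x) x := by
  refine ((differentiableAt_Gamma fun m => ?_).log (Gamma_pos_of_pos hx).ne').hasDerivAt
  linarith [(Nat.cast_nonneg m : (0 : ℝ) ≤ m)]

lemma sin_pi_mul_pos {x : ℝ} (h0 : 0 < x) (h1 : x < 1) : 0 < sin (π * x) :=
  sin_pos_of_pos_of_lt_pi (by positivity [pi_pos]) (by nlinarith [pi_pos])

lemma hasDerivAt_log_sin_pi_mul {x : ℝ} (hx : sin (π * x) ≠ 0) :
    HasDerivAt (fun y => log (sin (π * y))) (π * cot (π * x)) x := by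
  have h := (((hasDerivAt_id' x).const_mul π).sin).log hx
  rw [cot_eq_cos_div_sin]
  convert h using 1
  ring

lemma log_Gamma_add_log_Gamma_one_sub {y : ℝ} (h0 : 0 < y) (h1 : y < 1) :
    log (Gamma y) + log (Gamma (1 - y)) = log π - log (sin (π * y)) := by
  rw [← log_mul (Gamma_pos_of_pos h0).ne' (Gamma_pos_of_pos (by linarith)).ne',
    Gamma_mul_Gamma_one_sub, log_div pi_pos.ne' (sin_pi_mul_pos h0 h1).ne']

theorem digamma_one_sub {x : ℝ} (h0 : 0 < x) (h1 : x < 1) :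
    digamma (1 - x) = digamma x + π * cot (π * x) := by
  have hlhs : HasDerivAt (fun y => log (Gamma y) + log (Gamma (1 - y)))
      (digamma x - digamma (1 - x)) x := by
    have h := (hasDerivAt_log_Gamma (x := 1 - x) (by linarith)).comp x
      ((hasDerivAt_id x).const_sub 1)
    simpa [Function.comp_def, Pi.add_def, sub_eq_add_neg] using (hasDerivAt_log_Gamma h0).add h
  have hrhs := ((hasDerivAt_log_sin_pi_mul (sin_pi_mul_pos h0 h1).ne').const_sub (log π))
    |>.congr_of_eventuallyEq <| Filter.eventually_of_mem (Ioo_mem_nhds h0 h1)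
      fun y hy => log_Gamma_add_log_Gamma_one_sub hy.1 hy.2
  linarith [hrhs.unique hlhs]

lemma cot_pi_sub (x : ℝ) : cot (π - x) = -cot x := by
  rw [cot_eq_cos_div_sin, cot_eq_cos_div_sin, cos_pi_sub, sin_pi_sub, neg_div]

lemma exists_intCast_eq_intCast_sub_iff (n : ℤ) (y : ℝ) :
    (∃ m : ℤ, (n : ℝ) - y = m) ↔ ∃ m : ℤ, y = m := by
  constructor <;> rintro ⟨m, hm⟩ <;> exact ⟨n - m, by push_cast; linarith⟩

lemma B1_of_not_exists_intCast_eq {y : ℝ} (hy : ¬∃ n : ℤ, y = n) : B1 y = Int.fract y - 1 / 2 :=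
  if_neg hy

lemma fract_ne_zero_of_not_exists_intCast_eq {y : ℝ} (hy : ¬∃ n : ℤ, y = n) : Int.fract y ≠ 0 :=
  fun h => hy ⟨⌊y⌋, by linarith [Int.floor_add_fract y]⟩

lemma B1_intCast_sub (n : ℤ) (y : ℝ) : B1 (n - y) = -B1 y := by
  by_cases hy : ∃ m : ℤ, y = m
  · simp [B1, hy, exists_intCast_eq_intCast_sub_iff]
  · rw [B1_of_not_exists_intCast_eq hy,
      B1_of_not_exists_intCast_eq (by rwa [exists_intCast_eq_intCast_sub_iff]),
      sub_eq_add_neg (n : ℝ), Int.fract_intCast_add,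
      Int.fract_neg (fract_ne_zero_of_not_exists_intCast_eq hy)]
    ring

lemma fract_sub_B1_intCast_sub (n : ℤ) (y : ℝ) :
    Int.fract (n - y) - B1 (n - y) = Int.fract y - B1 y := by
  rw [B1_intCast_sub]
  by_cases hy : ∃ m : ℤ, y = m
  · obtain ⟨m, rfl⟩ := hy
    simp [B1, ← Int.cast_sub]
  · rw [B1_of_not_exists_intCast_eq hy, sub_eq_add_neg (n : ℝ), Int.fract_intCast_add,
      Int.fract_neg (fract_ne_zero_of_not_exists_intCast_eq hy)]
    ring

theorem Finset.sum_Icc_one_sub_reflect {M : Type*} [AddCommMonoid M] (q : ℕ) (F : ℕ → M) :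
    ∑ k ∈ Icc 1 (q - 1), F (q - k) = ∑ k ∈ Icc 1 (q - 1), F k := by
  have h : Icc 1 (q - 1) = Ico 1 q := by ext; simp only [mem_Icc, mem_Ico]; omega
  simpa [h] using sum_Ico_reflect F 1 (Nat.le_succ q)

lemma Finset.sum_Icc_eq_zero_of_reflect_neg (q : ℕ) (F : ℕ → ℝ)
    (hF : ∀ k ∈ Icc 1 (q - 1), F (q - k) = -F k) : ∑ k ∈ Icc 1 (q - 1), F k = 0 := by
  have h := sum_Icc_one_sub_reflect q F
  rw [sum_congr rfl hF, sum_neg_distrib] at h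
  linarith

lemma natCast_sub_mul_div {q k : ℕ} (hk : k ∈ Icc 1 (q - 1)) (a : ℝ) :
    ((q - k : ℕ) : ℝ) * a / q = a - k * a / q := by
  rw [mem_Icc] at hk
  have hq : (q : ℝ) ≠ 0 := by norm_cast; omega
  rw [Nat.cast_sub (by omega)]
  field_simp

lemma natCast_sub_div {q k : ℕ} (hk : k ∈ Icc 1 (q - 1)) :
    ((q - k : ℕ) : ℝ) / q = 1 - k / q := by
  simpa using natCast_sub_mul_div hk 1

lemma two_mul_sum_B1_mul_digamma (p : ℤ) (q : ℕ) :
    2 * ∑ k ∈ Icc 1 (q - 1), B1 ((k : ℝ) * p / q) * digamma ((k : ℝ) / q) =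
      -π * ∑ k ∈ Icc 1 (q - 1), B1 ((k : ℝ) * p / q) * cot (k * π / q) := by
  nth_rw 1 [two_mul, ← sum_Icc_one_sub_reflect q]
  rw [← sum_add_distrib, mul_sum]
  refine sum_congr rfl fun k hk => ?_
  have hx : (0 : ℝ) < k / q ∧ (k : ℝ) / q < 1 := by
    rw [mem_Icc] at hk
    constructor
    · apply div_pos <;> norm_cast <;> omega
    · rw [div_lt_one (by norm_cast; omega)]; norm_cast; omega
  have hcot_arg : π * (k / q) = k * π / q := by ring
  rw [natCast_sub_mul_div hk, natCast_sub_div hk, B1_intCast_sub, digamma_one_sub hx.1 hx.2,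
    hcot_arg]
  ring

lemma sum_fract_mul_cot_eq_sum_B1_mul_cot (p : ℤ) (q : ℕ) :
    ∑ k ∈ Icc 1 (q - 1), Int.fract ((k : ℝ) * p / q) * cot (k * π / q) =
      ∑ k ∈ Icc 1 (q - 1), B1 ((k : ℝ) * p / q) * cot (k * π / q) := by
  rw [← sub_eq_zero, ← sum_sub_distrib]
  refine sum_Icc_eq_zero_of_reflect_neg q _ fun k hk => ?_
  rw [← sub_mul, ← sub_mul, natCast_sub_mul_div hk, natCast_sub_mul_div hk,
    fract_sub_B1_intCast_sub, cot_pi_sub, mul_neg]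

theorem vasyunin_eq_digamma_sum_general (p : ℤ) (q : ℕ) :
    ∑ k ∈ Finset.Icc 1 (q - 1), Int.fract ((k : ℝ) * p / q) * Real.cot (k * Real.pi / q) =
      -(2 / Real.pi) * ∑ k ∈ Finset.Icc 1 (q - 1), B1 ((k : ℝ) * p / q) * digamma ((k : ℝ) / q) := by
  rw [sum_fract_mul_cot_eq_sum_B1_mul_cot, ← neg_div, div_mul_eq_mul_div, neg_mul,
    two_mul_sum_B1_mul_digamma, neg_mul, neg_neg, mul_div_cancel_left₀ _ pi_ne_zero]

theorem vasyunin_eq_digamma_sum (p : ℤ) (q : ℕ) (hq : 0 < q) (hcop : Int.gcd p q = 1) :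
    ∑ k ∈ Finset.Icc 1 (q - 1), Int.fract ((k : ℝ) * p / q) * Real.cot (k * Real.pi / q) =
      -(2 / Real.pi) * ∑ k ∈ Finset.Icc 1 (q - 1), B1 ((k : ℝ) * p / q) * digamma ((k : ℝ) / q) :=
  vasyunin_eq_digamma_sum_general p q
end

section
/- Let g : ℤ → ℂ have period q (q a positive integer). Then ∑_{n≥1} g(n)/(n(n+1)) = g(0) + (1/q) ∑_{r=1}^{q} (g(r−1) − g(r))·ψ(r/q). -/
/-!
Since `1 / (n (n + 1)) = 1 / n - 1 / (n + 1)`, summation by parts turns the partial sums into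
`g 0 - g N / (N + 1) + ∑_{n < N} (g (n + 1) - g n) / (n + 1)`. Along `N = q m`, grouping the last
sum by residues mod `q` gives `∑_{j < q} (g (j + 1) - g j) · q⁻¹ ∑_{k < m} ((j + 1) / q + k)⁻¹`.
The coefficients `g (j + 1) - g j` sum to zero over a period, so `log m` may be subtracted from
each inner sum, and `∑_{k < m} (x + k)⁻¹ - log m → -ψ x`: by `ψ (x + 1) = ψ x + x⁻¹` the inner sum
is `ψ (x + m) - ψ x`, while `ψ (m + 1) = -γ + H_m` and, `ψ` being monotone (`log Γ` is convex),
`ψ (x + m) - ψ (m + 1) → 0`.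
-/

open Filter Topology Finset Function

lemma differentiableAt_log_Gamma {x : ℝ} (hx : 0 < x) :
    DifferentiableAt ℝ (fun y => Real.log (Real.Gamma y)) x :=
  (Real.differentiableOn_Gamma_Ioi.differentiableAt (Ioi_mem_nhds hx)).log
    (Real.Gamma_pos_of_pos hx).ne'

lemma digamma_add_one {x : ℝ} (hx : 0 < x) : digamma (x + 1) = digamma x + x⁻¹ := by
  rw [digamma, digamma, ← deriv_comp_add_const, ← Real.deriv_log,
    ← deriv_add (differentiableAt_log_Gamma hx) (Real.differentiableAt_log hx.ne')]
  refine EventuallyEq.deriv_eq ?_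
  filter_upwards [eventually_gt_nhds hx] with y hy
  rw [Real.Gamma_add_one hy.ne', Real.log_mul hy.ne' (Real.Gamma_pos_of_pos hy).ne', add_comm,
    Pi.add_apply]

lemma digamma_add_nat {x : ℝ} (hx : 0 < x) (n : ℕ) :
    digamma (x + n) = digamma x + ∑ k ∈ range n, (x + k)⁻¹ := by
  induction n with
  | zero => simp
  | succ n ih =>
    rw [Nat.cast_succ, ← add_assoc, digamma_add_one (by positivity), ih, sum_range_succ, add_assoc]

lemma digamma_nat_add_one (n : ℕ) :
    digamma (n + 1) = -Real.eulerMascheroniConstant + harmonic n := by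
  have hn : (0 : ℝ) < n + 1 := n.cast_add_one_pos
  rw [digamma, deriv.log (Real.differentiableOn_Gamma_Ioi.differentiableAt (Ioi_mem_nhds hn))
      (Real.Gamma_pos_of_pos hn).ne',
    Real.deriv_Gamma_nat, Real.Gamma_nat_eq_factorial, mul_div_cancel_left₀ _ (by positivity)]

lemma monotoneOn_digamma : MonotoneOn digamma (Set.Ioi 0) :=
  Real.convexOn_log_Gamma.monotoneOn_deriv fun _ hx => differentiableAt_log_Gamma hx

lemma tendsto_digamma_add_nat_sub_digamma_nat_add_one {x : ℝ} (hx₀ : 0 < x) (hx₁ : x ≤ 1) :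
    Tendsto (fun n : ℕ => digamma (x + n) - digamma (n + 1)) atTop (𝓝 0) := by
  have hlower : ∀ᶠ n : ℕ in atTop, -(n : ℝ)⁻¹ ≤ digamma (x + n) - digamma (n + 1) := by
    filter_upwards [eventually_gt_atTop 0] with n hn
    have hn' : (0 : ℝ) < n := by exact_mod_cast hn
    have := monotoneOn_digamma hn' (by simp only [Set.mem_Ioi]; positivity)
      (by linarith : (n : ℝ) ≤ x + n)
    rw [digamma_add_one hn']
    linarith
  have hupper : ∀ n : ℕ, digamma (x + n) - digamma (n + 1) ≤ 0 := fun n => by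
    have := monotoneOn_digamma (by simp only [Set.mem_Ioi]; positivity)
      (by simp only [Set.mem_Ioi]; positivity) (by linarith : x + n ≤ n + 1)
    linarith
  refine tendsto_of_tendsto_of_tendsto_of_le_of_le' ?_ tendsto_const_nhds hlower
    (Eventually.of_forall hupper)
  simpa using (tendsto_inv_atTop_nhds_zero_nat (𝕜 := ℝ)).neg

lemma tendsto_sum_inv_add_sub_log {x : ℝ} (hx₀ : 0 < x) (hx₁ : x ≤ 1) :
    Tendsto (fun n : ℕ => ∑ k ∈ range n, (x + k)⁻¹ - Real.log n) atTop (𝓝 (-digamma x)) := by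
  have key : ∀ n : ℕ, ∑ k ∈ range n, (x + k)⁻¹ - Real.log n =
      (digamma (x + n) - digamma (n + 1)) + (harmonic n - Real.log n)
        - Real.eulerMascheroniConstant - digamma x := fun n => by
    rw [digamma_add_nat hx₀, digamma_nat_add_one]
    ring
  simp only [key]
  simpa using (((tendsto_digamma_add_nat_sub_digamma_nat_add_one hx₀ hx₁).add
    Real.tendsto_harmonic_sub_log).sub_const Real.eulerMascheroniConstant).sub_const (digamma x)

lemma sum_range_div_succ_mul_add_two {K : Type*} [Field K] [CharZero K] (f : ℕ → K) (N : ℕ) :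
    ∑ n ∈ range N, f (n + 1) / ((n + 1) * (n + 2)) =
      f 0 - f N / (N + 1) + ∑ n ∈ range N, (f (n + 1) - f n) / (n + 1) := by
  induction N with
  | zero => simp
  | succ N ih =>
    have h₁ : (N : K) + 1 ≠ 0 := N.cast_add_one_ne_zero
    have h₂ : (N : K) + 2 ≠ 0 := by exact_mod_cast (N + 1).succ_ne_zero
    rw [sum_range_succ, sum_range_succ, ih, Nat.cast_succ, add_assoc (N : K), one_add_one_eq_two]
    field_simp
    ring

lemma summable_div_succ_mul_add_two {𝕜 : Type*} [RCLike 𝕜] {f : ℕ → 𝕜} {C : ℝ}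
    (hf : ∀ n, ‖f n‖ ≤ C) : Summable fun n : ℕ => f n / ((n + 1) * (n + 2)) := by
  have hs : Summable fun n : ℕ => C * (((n : ℝ) + 1) ^ 2)⁻¹ := by
    refine Summable.mul_left C ?_
    exact_mod_cast (summable_nat_add_iff 1).mpr (Real.summable_nat_pow_inv.mpr one_lt_two)
  refine Summable.of_norm_bounded hs fun n => ?_
  have hC : 0 ≤ C := (norm_nonneg _).trans (hf 0)
  have hcast : ((n : 𝕜) + 1) * ((n : 𝕜) + 2) = (((n + 1) * (n + 2) : ℕ) : 𝕜) := by
    push_cast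
    ring
  rw [norm_div, hcast, RCLike.norm_natCast, div_eq_mul_inv]
  push_cast
  gcongr
  · exact hf n
  · nlinarith

lemma Function.Periodic.finite_range_nat {α : Type*} {f : ℕ → α} {q : ℕ} (hf : Periodic f q)
    (hq : q ≠ 0) : (Set.range f).Finite :=
  ((Set.finite_Iio q).image f).subset <| by
    rintro _ ⟨n, rfl⟩
    exact ⟨n % q, Nat.mod_lt n hq.bot_lt, hf.map_mod_nat n⟩

lemma Function.Periodic.sum_range_mul_mul {R : Type*} [NonUnitalNonAssocSemiring R] {f : ℕ → R}
    {q : ℕ} (hf : Periodic f q) (w : ℕ → R) (m : ℕ) :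
    ∑ n ∈ range (q * m), f n * w n = ∑ j ∈ range q, f j * ∑ k ∈ range m, w (q * k + j) := by
  have hregroup : ∀ F : ℕ → R,
      ∑ n ∈ range (q * m), F n = ∑ k ∈ range m, ∑ j ∈ range q, F (q * k + j) := fun F => by
    induction m with
    | zero => simp
    | succ m ih => rw [Nat.mul_succ, sum_range_add, ih, sum_range_succ]
  rw [hregroup, sum_comm]
  refine sum_congr rfl fun j _ => ?_
  rw [mul_sum]
  refine sum_congr rfl fun k _ => ?_
  rw [add_comm, mul_comm q]
  congr 1
  simpa using hf.nat_mul k j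

lemma Function.Periodic.sum_range_sub_eq_zero {G : Type*} [AddCommGroup G] {f : ℕ → G} {q : ℕ}
    (hf : Periodic f q) : ∑ j ∈ range q, (f (j + 1) - f j) = 0 := by
  rw [Finset.sum_range_sub, hf.eq, sub_self]

lemma tendsto_sum_mul_of_sum_eq_zero {ι α R : Type*} [CommRing R] [TopologicalSpace R]
    [IsTopologicalRing R] {l : Filter α} {s : Finset ι} {c : ι → R} (hc : ∑ j ∈ s, c j = 0)
    {A : ι → α → R} {L : α → R} {a : ι → R}
    (hA : ∀ j ∈ s, Tendsto (fun m => A j m - L m) l (𝓝 (a j))) :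
    Tendsto (fun m => ∑ j ∈ s, c j * A j m) l (𝓝 (∑ j ∈ s, c j * a j)) := by
  have key : ∀ m, ∑ j ∈ s, c j * A j m = ∑ j ∈ s, c j * (A j m - L m) := fun m => by
    simp only [mul_sub, sum_sub_distrib, ← sum_mul, hc, zero_mul, sub_zero]
  simp only [key]
  exact tendsto_finsetSum s fun j hj => (hA j hj).const_mul (c j)

lemma sum_range_inv_mul_add_add_one {q : ℕ} (hq : 0 < q) (j m : ℕ) :
    ∑ k ∈ range m, (((q * k + j : ℕ) : ℂ) + 1)⁻¹ =
      (q : ℂ)⁻¹ * ((∑ k ∈ range m, (((j : ℝ) + 1) / q + k)⁻¹ : ℝ) : ℂ) := by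
  have hq' : (q : ℂ) ≠ 0 := by exact_mod_cast hq.ne'
  push_cast
  rw [mul_sum]
  refine sum_congr rfl fun k _ => ?_
  rw [show ((j : ℂ) + 1) / q + k = (q * k + j + 1) / q by field_simp; ring, inv_div,
    div_eq_mul_inv, inv_mul_cancel_left₀ hq']

lemma Function.Periodic.tendsto_sum_range_mul_sub_div {f : ℕ → ℂ} {q : ℕ} (hf : Periodic f q)
    (hq : 0 < q) :
    Tendsto (fun m => ∑ n ∈ range (q * m), (f (n + 1) - f n) / (n + 1)) atTop
      (𝓝 ((1 / q) * ∑ j ∈ range q, (f j - f (j + 1)) * digamma ((j + 1) / q))) := by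
  have hd : Periodic (fun n => f (n + 1) - f n) q := (hf.add_const 1).sub hf
  have hregroup : ∀ m, ∑ n ∈ range (q * m), (f (n + 1) - f n) / (n + 1) =
      ∑ j ∈ range q, (f (j + 1) - f j) *
        ((q : ℂ)⁻¹ * ((∑ k ∈ range m, (((j : ℝ) + 1) / q + k)⁻¹ : ℝ) : ℂ)) := fun m => by
    simp only [div_eq_mul_inv, hd.sum_range_mul_mul (fun n => ((n : ℂ) + 1)⁻¹),
      sum_range_inv_mul_add_add_one hq]
  have hlimit : ∀ j ∈ range q, Tendsto (fun m : ℕ =>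
      (q : ℂ)⁻¹ * ((∑ k ∈ range m, (((j : ℝ) + 1) / q + k)⁻¹ : ℝ) : ℂ) -
        (q : ℂ)⁻¹ * (Real.log m : ℂ)) atTop (𝓝 ((q : ℂ)⁻¹ * (-digamma ((j + 1) / q) : ℝ))) := by
    intro j hj
    have hj₀ : (0 : ℝ) < ((j : ℝ) + 1) / q := by positivity
    have hj₁ : ((j : ℝ) + 1) / q ≤ 1 := by
      rw [div_le_one (by positivity)]
      exact_mod_cast mem_range.mp hj
    simp only [← mul_sub, ← Complex.ofReal_sub]
    exact ((Complex.continuous_ofReal.tendsto _).comp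
      (tendsto_sum_inv_add_sub_log hj₀ hj₁)).const_mul _
  simp only [hregroup]
  convert tendsto_sum_mul_of_sum_eq_zero hf.sum_range_sub_eq_zero hlimit using 2
  rw [mul_sum]
  refine sum_congr rfl fun j _ => ?_
  push_cast
  ring

lemma Function.Periodic.hasSum_div_succ_mul_add_two {f : ℕ → ℂ} {q : ℕ}
    (hf : Periodic f q) (hq : 0 < q) :
    HasSum (fun n : ℕ => f (n + 1) / ((n + 1) * (n + 2)))
      (f 0 + (1 / q) * ∑ j ∈ range q, (f j - f (j + 1)) * digamma ((j + 1) / q)) := by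
  obtain ⟨C, hC⟩ := isBounded_iff_forall_norm_le.mp (hf.finite_range_nat hq.ne').isBounded
  have hs := summable_div_succ_mul_add_two fun n => hC (f (n + 1)) ⟨_, rfl⟩
  have hqm : Tendsto (fun m => q * m) atTop atTop := tendsto_id.const_mul_atTop' hq
  have htail : Tendsto (fun m => f (q * m) / ((q * m : ℕ) + 1 : ℂ)) atTop (𝓝 0) := by
    have h := ((tendsto_one_div_add_atTop_nhds_zero_nat (𝕜 := ℂ)).comp hqm).const_mul (f 0)
    rw [mul_zero] at h
    refine h.congr fun m => ?_
    rw [Function.comp_apply, mul_one_div]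
    congr 1
    rw [mul_comm, ← smul_eq_mul, hf.nsmul_eq]
  have hpartial : Tendsto (fun m => ∑ n ∈ range (q * m), f (n + 1) / ((n + 1) * (n + 2)))
      atTop (𝓝 (f 0 + (1 / q) * ∑ j ∈ range q, (f j - f (j + 1)) * digamma ((j + 1) / q))) := by
    simp only [sum_range_div_succ_mul_add_two]
    simpa using (tendsto_const_nhds.sub htail).add (hf.tendsto_sum_range_mul_sub_div hq)
  exact tendsto_nhds_unique (hs.hasSum.tendsto_sum_nat.comp hqm) hpartial ▸ hs.hasSum

theorem periodic_series_n_n_add_one (q : ℕ) (hq : 0 < q) (g : ℤ → ℂ)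
    (hper : ∀ n : ℤ, g (n + q) = g n) :
    ∑' n : ℕ+, g n / ((n : ℂ) * ((n : ℂ) + 1)) =
      g 0 + (1 / (q : ℂ)) * ∑ r ∈ Finset.Icc 1 q,
        (g (r - 1) - g r) * (digamma ((r : ℝ) / q) : ℂ) := by
  have hf : Periodic (fun n : ℕ => g n) q := fun n => by simpa using hper n
  rw [tsum_pnat_eq_tsum_succ (f := fun n : ℕ => g n / ((n : ℂ) * ((n : ℂ) + 1)))]
  convert (hf.hasSum_div_succ_mul_add_two hq).tsum_eq using 1
  · congr 1 with n
    push_cast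
    ring
  · rw [← Ico_add_one_right_eq_Icc 1 q, sum_Ico_eq_sum_range, Nat.add_sub_cancel]
    congr 2
    refine sum_congr rfl fun j _ => ?_
    push_cast
    ring_nf
end
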